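/- For every x ∈ H the bilinear form ω_x on V is alternating, i.e. ω_x(u, v) = −ω_x(v, u) for all u, v ∈ V; and if moreover Q(x) ≠ 0, then ω_x is nondegenerate: for every u ∈ V with u ≠ 0 there exists v ∈ V with ω_x(u, v) ≠ 0. -/

import Mathlib

open CliffordAlgebra

section CliffordModule

variable {R : Type*} [CommRing R] {M : Type*} [AddCommGroup M] [Module R M]
  {Q : QuadraticForm R M} {V : Type*} [AddCommGroup V] [Module R V]
  [Module (CliffordAlgebra Q) V]

theorem CliffordAlgebra.ι_smul_ι_smul [IsScalarTower R (CliffordAlgebra Q) V] (x : M) (u : V) :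
    ι Q x • ι Q x • u = Q x • u := by
  rw [smul_smul, ι_sq_scalar, algebraMap_smul]

/-- Since `ῑ(x) = -ι(x)`, invariance moves `ι(x)` across `τ` at the cost of a sign. -/
theorem LinearMap.BilinForm.apply_ι_smul_eq_neg_apply_ι_smul (τ : LinearMap.BilinForm R V)
    (hτsymm : ∀ u v : V, τ u v = τ v u)
    (hτinv : ∀ (a : CliffordAlgebra Q) (u v : V), τ (a • u) v = τ u (involute (reverse a) • v))
    (x : M) (u v : V) : τ (ι Q x • u) v = -τ (ι Q x • v) u := by
  rw [hτinv, reverse_ι, involute_ι, neg_smul, map_neg, hτsymm u]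

end CliffordModule

theorem CliffordAlgebra.ι_smul_ne_zero {k M V : Type*} [Field k] [AddCommGroup M] [Module k M]
    {Q : QuadraticForm k M} [AddCommGroup V] [Module k V] [Module (CliffordAlgebra Q) V]
    [IsScalarTower k (CliffordAlgebra Q) V]
    {x : M} (hx : Q x ≠ 0) {u : V} (hu : u ≠ 0) : ι Q x • u ≠ 0 := by
  intro h
  have hsq := ι_smul_ι_smul (Q := Q) x u
  rw [h, smul_zero, eq_comm, smul_eq_zero] at hsq
  exact hsq.elim hx hu

theorem omega_alternating_and_nondegenerate
    {k : Type*} [Field k]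
    {H : Type*} [AddCommGroup H] [Module k H]
    (Q : QuadraticForm k H)
    {V : Type*} [AddCommGroup V] [Module k V]
    [Module (CliffordAlgebra Q) V] [IsScalarTower k (CliffordAlgebra Q) V]
    (τ : LinearMap.BilinForm k V)
    (hτsymm : ∀ u v : V, τ u v = τ v u)
    (hτnd : LinearMap.BilinForm.Nondegenerate τ)
    (hτinv : ∀ (a : CliffordAlgebra Q) (u v : V),
      τ (a • u) v = τ u (involute (reverse a) • v))
    (x : H) :
    (∀ u v : V, τ (ι Q x • u) v = - τ (ι Q x • v) u) ∧
    (Q x ≠ 0 → ∀ u : V, u ≠ 0 → ∃ v : V, τ (ι Q x • u) v ≠ 0) := by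
  refine ⟨τ.apply_ι_smul_eq_neg_apply_ι_smul hτsymm hτinv x, fun hQ u hu => ?_⟩
  by_contra! h
  exact ι_smul_ne_zero hQ hu (hτnd.1 _ h)
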